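/- arXiv:2110.02851 — 3 statements merged into one kernel-verified Lean document; each statement's English description precedes it below -/
import Mathlib

section
/- Anisotropic Cartan–Dieudonné: let (E,q) be a finite-dimensional anisotropic quadratic space over a field K whose polar form b is not identically zero. Then every φ in the orthogonal group O(E,q) can be written as a product of at most codim(F) orthogonal reflections (transvections in characteristic 2), where F is the fixed space of φ; in particular φ is a product of at most dim E such involutions. -/
open QuadraticMap Module LinearMap

private lemma acd_aux {K E : Type*} [Field K] [AddCommGroup E]
    [Module K E] [FiniteDimensional K E]
    (q : QuadraticForm K E) (hq : q.Anisotropic) :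
    ∀ (n : ℕ) (φ : E ≃ₗ[K] E), (∀ z, q (φ z) = q z) →
      finrank K E - finrank K (LinearMap.ker ((φ : E →ₗ[K] E) - LinearMap.id)) ≤ n →
      ∃ l : List (E →ₗ[K] E),
        l.length ≤ finrank K E -
          finrank K (LinearMap.ker ((φ : E →ₗ[K] E) - LinearMap.id)) ∧
        (∀ f ∈ l, ∃ a : E, q a ≠ 0 ∧ (∃ y, polar q a y ≠ 0) ∧
          ∀ z, f z = z - (polar q z a / q a) • a) ∧
        l.prod = (φ : E →ₗ[K] E) := by
  have hmem : ∀ (g : E →ₗ[K] E) (x : E),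
      x ∈ LinearMap.ker (g - LinearMap.id) ↔ g x = x := by
    intro g x
    simp [LinearMap.mem_ker, sub_eq_zero]
  intro n
  induction n with
  | zero =>
    intro φ hφ hn
    have hker : finrank K (LinearMap.ker ((φ : E →ₗ[K] E) - LinearMap.id)) =
        finrank K E := by
      have := Submodule.finrank_le (LinearMap.ker ((φ : E →ₗ[K] E) - LinearMap.id))
      omega
    have htop : LinearMap.ker ((φ : E →ₗ[K] E) - LinearMap.id) = ⊤ :=
      Submodule.eq_top_of_finrank_eq hker
    refine ⟨[], by simp, by simp, ?_⟩
    ext x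
    have : φ x = x := (hmem _ x).1 (htop ▸ Submodule.mem_top)
    simp [this]
  | succ n ih =>
    intro φ hφ hn
    by_cases hid : ∀ x, φ x = x
    · refine ⟨[], by simp, by simp, ?_⟩
      ext x
      simp [hid x]
    push_neg at hid
    obtain ⟨v, hv⟩ := hid
    set a : E := φ v - v with ha_def
    have ha : a ≠ 0 := sub_ne_zero.2 hv
    have hqa : q a ≠ 0 := fun h0 => ha (hq a h0)
    -- polar form invariance
    have hpol : ∀ x y, polar q (φ x) (φ y) = polar q x y := by
      intro x y
      simp [QuadraticMap.polar, ← map_add, hφ]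
    -- key computation: polar q (φ v) a = q a
    have e2 : q a = q (φ v) + q v - polar q (φ v) v := by
      have h1 : polar q (φ v) (-v) = q (φ v - v) - q (φ v) - q (-v) := by
        simp [QuadraticMap.polar, sub_eq_add_neg]
      have h2 : q (-v) = q v := by
        have := QuadraticMap.map_smul q (-1 : K) v
        simpa using this
      rw [QuadraticMap.polar_neg_right, h2] at h1
      rw [ha_def]
      linear_combination -h1
    have e1 : polar q (φ v) a = q (φ v) + q (φ v) - polar q (φ v) v := by
      rw [ha_def, QuadraticMap.polar_sub_right, QuadraticMap.polar_self, two_nsmul]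
    have hpa : polar q (φ v) a = q a := by
      rw [e1, e2, hφ v]
    -- the reflection τ
    set c : E →ₗ[K] K := (q a)⁻¹ • ((polarBilin q).flip a) with hc_def
    set τ : E →ₗ[K] E := LinearMap.id - (LinearMap.toSpanSingleton K E a) ∘ₗ c
      with hτ_def
    have hτ : ∀ z, τ z = z - (polar q z a / q a) • a := by
      intro z
      have : (q a)⁻¹ * polar q z a = polar q z a / q a := by
        rw [div_eq_mul_inv, mul_comm]
      simp [hτ_def, hc_def, LinearMap.toSpanSingleton_apply, smul_smul, this]
    have expand : ∀ (x : E) (t : K),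
        q (x - t • a) = q x + t * t * q a - t * polar q x a := by
      intro x t
      have h1 : polar q x (-(t • a)) = q (x - t • a) - q x - q (t • a) := by
        simp [QuadraticMap.polar, sub_eq_add_neg]
      rw [QuadraticMap.polar_neg_right, QuadraticMap.polar_smul_right] at h1
      have hs : q (t • a) = t * t * q a := QuadraticMap.map_smul q t a
      simp only [smul_eq_mul] at h1
      linear_combination hs - h1
    have hτq : ∀ z, q (τ z) = q z := by
      intro z
      rw [hτ z, expand z (polar q z a / q a)]
      field_simp
      ring
    have hτpol : ∀ z, polar q (τ z) a = - polar q z a := by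
      intro z
      rw [hτ z, QuadraticMap.polar_sub_left, QuadraticMap.polar_smul_left,
        QuadraticMap.polar_self, two_nsmul, smul_eq_mul]
      field_simp
      ring
    have hτinv : Function.Involutive τ := by
      intro z
      rw [hτ (τ z), hτpol z, hτ z, neg_div, neg_smul, sub_neg_eq_add,
        sub_add_cancel]
    -- the new isometry ψ = τ ∘ φ
    set τe : E ≃ₗ[K] E := LinearEquiv.ofInvolutive τ hτinv with hτe_def
    set ψ : E ≃ₗ[K] E := φ.trans τe with hψ_def
    have hψapp : ∀ z, ψ z = τ (φ z) := by
      intro z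
      simp [hψ_def, hτe_def, LinearEquiv.trans_apply]
    have hψ : ∀ z, q (ψ z) = q z := by
      intro z
      rw [hψapp z, hτq, hφ]
    have hψv : ψ v = v := by
      rw [hψapp v, hτ, hpa, div_self hqa, one_smul]
      simp [ha_def]
    -- fixed spaces
    have hFle : LinearMap.ker ((φ : E →ₗ[K] E) - LinearMap.id) ≤
        LinearMap.ker ((ψ : E →ₗ[K] E) - LinearMap.id) := by
      intro x hx
      have hx' : φ x = x := (hmem _ x).1 hx
      have hpxa : polar q x a = 0 := by
        have h1 : polar q x (φ v) = polar q x v := by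
          conv_lhs => rw [← hx']
          exact hpol x v
        rw [ha_def, QuadraticMap.polar_sub_right, h1, sub_self]
      refine (hmem _ x).2 ?_
      show ψ x = x
      rw [hψapp x, hx', hτ x, hpxa, zero_div, zero_smul, sub_zero]
    have hlt : LinearMap.ker ((φ : E →ₗ[K] E) - LinearMap.id) <
        LinearMap.ker ((ψ : E →ₗ[K] E) - LinearMap.id) := by
      refine lt_of_le_of_ne hFle (fun heq => ?_)
      have : v ∈ LinearMap.ker ((φ : E →ₗ[K] E) - LinearMap.id) := by
        rw [heq]
        exact (hmem _ v).2 hψv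
      exact hv ((hmem _ v).1 this)
    have hranklt : finrank K (LinearMap.ker ((φ : E →ₗ[K] E) - LinearMap.id)) <
        finrank K (LinearMap.ker ((ψ : E →ₗ[K] E) - LinearMap.id)) :=
      Submodule.finrank_lt_finrank_of_lt hlt
    have hrankle : finrank K (LinearMap.ker ((ψ : E →ₗ[K] E) - LinearMap.id)) ≤
        finrank K E := Submodule.finrank_le _
    obtain ⟨l', hl'len, hl'cond, hl'prod⟩ := ih ψ hψ (by omega)
    refine ⟨τ :: l', by simp; omega, ?_, ?_⟩
    · intro f hf
      rcases List.mem_cons.1 hf with hf | hf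
      · subst hf
        exact ⟨a, hqa, ⟨φ v, by rw [QuadraticMap.polar_comm, hpa]; exact hqa⟩, hτ⟩
      · exact hl'cond f hf
    · rw [List.prod_cons, hl'prod]
      ext z
      have : (ψ : E →ₗ[K] E) z = τ (φ z) := hψapp z
      simp only [Module.End.mul_apply, this]
      exact hτinv (φ z)

/-- Anisotropic Cartan–Dieudonné: if `(E, q)` is a finite-dimensional anisotropic
quadratic space whose polar form is not identically zero, then every `φ ∈ O(E,q)`
is a product of at most `codim F` orthogonal reflections (transvections in
characteristic 2) `τ_a : z ↦ z - (δ b(z,a) / q a) • a = z - (polar q z a / q a) • a`,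
where `F` is the fixed space of `φ`; in particular at most `dim E` of them. -/
theorem anisotropic_cartan_dieudonne {K E : Type*} [Field K] [AddCommGroup E]
    [Module K E] [FiniteDimensional K E]
    (q : QuadraticForm K E) (hq : q.Anisotropic)
    (hb : ∃ u v, QuadraticMap.polar q u v ≠ 0)
    (φ : E ≃ₗ[K] E) (hφ : ∀ z, q (φ z) = q z) :
    ∃ l : List (E →ₗ[K] E),
      l.length ≤ Module.finrank K E -
        Module.finrank K (LinearMap.ker ((φ : E →ₗ[K] E) - LinearMap.id)) ∧
      l.length ≤ Module.finrank K E ∧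
      (∀ f ∈ l, ∃ a : E, q a ≠ 0 ∧ (∃ y, QuadraticMap.polar q a y ≠ 0) ∧
        ∀ z, f z = z - (QuadraticMap.polar q z a / q a) • a) ∧
      l.prod = (φ : E →ₗ[K] E) := by
  obtain ⟨l, h1, h2, h3⟩ := acd_aux q hq
    (finrank K E - finrank K (LinearMap.ker ((φ : E →ₗ[K] E) - LinearMap.id)))
    φ hφ le_rfl
  exact ⟨l, h1, h1.trans (Nat.sub_le _ _), h2, h3⟩
end

section
/- Let (E,q) be a finite-dimensional anisotropic quadratic space of odd dimension n over a field K of characteristic ≠ 2, with polar form not identically zero. Then every element of SO(E,q) is a product of at most n − 1 involutions belonging to SO(E,q). -/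
/-!
For an isometry `φ` and a vector `v` with `φ v ≠ v`, the vector `v - φ v` is non-isotropic
because `q` is anisotropic, and the reflection in it sends `φ v` to `v` while fixing the fixed
space of `φ` pointwise. Composing with it enlarges the fixed space, so `φ` is a product of at most
`n` reflections (Cartan–Dieudonné). Reflections have determinant `-1`, so for `φ ∈ SO(E, q)` their
number is even, hence at most `n - 1` since `n` is odd. In odd dimension `-1` is central of
determinant `-1`, so replacing each reflection `r` by `-r` gives involutions in `SO(E, q)` with the
same product.
-/

open Module

theorem List.prod_map_mul_left_of_commute {M : Type*} [Monoid M] {c : M} {l : List M}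
    (hc : ∀ x ∈ l, Commute c x) : (l.map (c * ·)).prod = c ^ l.length * l.prod := by
  induction l with
  | nil => simp
  | cons x l ih =>
    rw [List.forall_mem_cons] at hc
    rw [map_cons, prod_cons, ih hc.2, length_cons, prod_cons, pow_succ', mul_assoc, mul_assoc,
      ← mul_assoc x, ((hc.1.pow_left _).eq).symm, mul_assoc]

section

variable {R M : Type*} [AddCommGroup M]

theorem LinearEquiv.commute_neg [Semiring R] [Module R M] (g : M ≃ₗ[R] M) :
    Commute (LinearEquiv.neg R) g := by
  ext; simp

theorem LinearEquiv.neg_mul_neg [Semiring R] [Module R M] :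
    (LinearEquiv.neg R : M ≃ₗ[R] M) * LinearEquiv.neg R = 1 := by
  ext; simp

variable [CommRing R] [Module R M] [Module.Free R M]

theorem LinearEquiv.det_neg :
    LinearMap.det ((LinearEquiv.neg R : M ≃ₗ[R] M) : M →ₗ[R] M) = (-1) ^ finrank R M := by
  have : ((LinearEquiv.neg R : M ≃ₗ[R] M) : M →ₗ[R] M) = (-1 : R) • LinearMap.id := by
    ext; simp
  rw [this, LinearMap.det_smul, LinearMap.det_id, mul_one]

variable [Module.Finite R M]

theorem LinearMap.det_id_sub_smulRight (f : Dual R M) (x : M) :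
    LinearMap.det (LinearMap.id - f.smulRight x) = 1 - f x := by
  classical
  let b := Module.Free.chooseBasis R M
  rw [← LinearMap.det_toMatrix b, map_sub, LinearMap.toMatrix_id, LinearMap.toMatrix_smulRight,
    sub_eq_add_neg, ← Matrix.neg_vecMulVec, Matrix.vecMulVec_eq Unit,
    Matrix.det_one_add_replicateCol_mul_replicateRow, dotProduct_neg, ← sub_eq_add_neg]
  congr 1
  conv_rhs => rw [← b.sum_repr x, map_sum]
  simp [dotProduct, mul_comm]

theorem Module.det_reflection {x : M} {f : Dual R M} (h : f x = 2) :
    LinearMap.det (reflection h : M →ₗ[R] M) = -1 := by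
  change LinearMap.det (preReflection x f) = -1
  rw [preReflection, LinearMap.det_id_sub_smulRight, h]
  norm_num

end

namespace QuadraticMap

variable {K E : Type*} [Field K] [AddCommGroup E] [Module K E] (q : QuadraticForm K E)

theorem inv_smul_polarBilin_apply_self {v : E} (hv : q v ≠ 0) :
    ((q v)⁻¹ • polarBilin q v) v = 2 := by
  simp only [LinearMap.smul_apply, polarBilin_apply_apply, polar_self, smul_eq_mul, two_nsmul]
  field_simp
  ring

noncomputable def reflection {v : E} (hv : q v ≠ 0) : E ≃ₗ[K] E :=
  Module.reflection (q.inv_smul_polarBilin_apply_self hv)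

variable {q} {v : E} (hv : q v ≠ 0)

theorem reflection_apply (y : E) :
    q.reflection hv y = y - ((q v)⁻¹ * polar q v y) • v := by
  simp [reflection, Module.reflection_apply, polarBilin_apply_apply, smul_eq_mul]

theorem reflection_mul_self : q.reflection hv * q.reflection hv = 1 := by
  ext y
  exact Module.involutive_reflection (q.inv_smul_polarBilin_apply_self hv) y

theorem map_reflection (y : E) : q (q.reflection hv y) = q y := by
  rw [reflection_apply, sub_eq_add_neg, ← neg_smul, QuadraticMap.map_add q, QuadraticMap.map_smul,
    polar_smul_right, polar_comm q y v, smul_eq_mul, smul_eq_mul]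
  field_simp
  ring

theorem det_reflection [FiniteDimensional K E] :
    LinearMap.det (q.reflection hv : E →ₗ[K] E) = -1 :=
  Module.det_reflection _

theorem det_prod_of_forall_mem_reflection [FiniteDimensional K E] {l : List (E ≃ₗ[K] E)}
    (hl : ∀ g ∈ l, ∃ (v : E) (hv : q v ≠ 0), g = q.reflection hv) :
    LinearMap.det (l.prod : E →ₗ[K] E) = (-1) ^ l.length := by
  induction l with
  | nil => simp
  | cons g l ih =>
    rw [List.forall_mem_cons] at hl
    obtain ⟨⟨v, hv, rfl⟩, hl⟩ := hl
    rw [List.prod_cons, LinearEquiv.coe_toLinearMap_mul, map_mul, det_reflection,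
      ih hl, List.length_cons, pow_succ']

variable {φ : E ≃ₗ[K] E}

theorem polar_map_map_of_isometry (hφ : ∀ z, q (φ z) = q z) (a b : E) :
    polar q (φ a) (φ b) = polar q a b := by
  simp only [polar, ← map_add, hφ]

theorem reflection_sub_apply_map (hφ : ∀ z, q (φ z) = q z) (hv : q (v - φ v) ≠ 0) :
    q.reflection hv (φ v) = v := by
  have hpolar : polar q (v - φ v) (φ v) = -q (v - φ v) := by
    rw [polar_sub_left, polar_self, hφ, sub_eq_add_neg v, QuadraticMap.map_add q,
      QuadraticMap.map_neg, polar_neg_right, hφ, two_nsmul]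
    ring
  rw [reflection_apply, hpolar, mul_neg, inv_mul_cancel₀ hv, neg_smul, one_smul, sub_neg_eq_add,
    add_sub_cancel]

theorem reflection_sub_apply_of_map_eq (hφ : ∀ z, q (φ z) = q z) (hv : q (v - φ v) ≠ 0)
    {w : E} (hw : φ w = w) : q.reflection hv w = w := by
  have hpolar : polar q (v - φ v) w = 0 := by
    conv_lhs => rw [polar_sub_left, ← hw, polar_map_map_of_isometry hφ, hw, sub_self]
  rw [reflection_apply, hpolar, mul_zero, zero_smul, sub_zero]

theorem fixedSubmodule_lt_fixedSubmodule_reflection_mul (hφ : ∀ z, q (φ z) = q z)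
    (hv : q (v - φ v) ≠ 0) : φ.fixedSubmodule < (q.reflection hv * φ).fixedSubmodule := by
  refine SetLike.lt_iff_le_and_exists.2 ⟨fun w hw ↦ ?_, v, ?_, fun hvφ ↦ hv ?_⟩
  · have hw : φ w = w := LinearMap.mem_fixedSubmodule_iff.1 hw
    simp [hw, reflection_sub_apply_of_map_eq hφ hv hw]
  · simp [reflection_sub_apply_map hφ hv]
  · have hvφ : φ v = v := LinearMap.mem_fixedSubmodule_iff.1 hvφ
    rw [hvφ, sub_self, map_zero]

theorem exists_prod_reflection_eq [FiniteDimensional K E] (hq : q.Anisotropic)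
    (φ : E ≃ₗ[K] E) (hφ : ∀ z, q (φ z) = q z) :
    ∃ l : List (E ≃ₗ[K] E),
      l.length ≤ finrank K E - finrank K φ.fixedSubmodule ∧
      (∀ g ∈ l, ∃ (v : E) (hv : q v ≠ 0), g = q.reflection hv) ∧ l.prod = φ := by
  induction hm : finrank K E - finrank K φ.fixedSubmodule
    using Nat.strong_induction_on generalizing φ with
  | _ m ih =>
  by_cases htop : φ.fixedSubmodule = ⊤
  · exact ⟨[], Nat.zero_le _, by simp, (LinearEquiv.fixedSubmodule_eq_top_iff.1 htop).symm⟩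
  obtain ⟨v, -, hv⟩ := SetLike.exists_of_lt (lt_top_iff_ne_top.2 htop)
  have hx : q (v - φ v) ≠ 0 :=
    fun h ↦ hv (LinearMap.mem_fixedSubmodule_iff.2 (sub_eq_zero.1 (hq _ h)).symm)
  have hrank := Submodule.finrank_lt_finrank_of_lt
    (fixedSubmodule_lt_fixedSubmodule_reflection_mul hφ hx)
  have hle := Submodule.finrank_le (q.reflection hx * φ).fixedSubmodule
  obtain ⟨l, hlen, hl, hprod⟩ :=
    ih _ (by omega) (q.reflection hx * φ) (fun z ↦ (map_reflection hx _).trans (hφ z)) rfl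
  refine ⟨q.reflection hx :: l, ?_, List.forall_mem_cons.2 ⟨⟨_, hx, rfl⟩, hl⟩, ?_⟩
  · rw [List.length_cons]
    omega
  · rw [List.prod_cons, hprod, ← mul_assoc, reflection_mul_self, one_mul]

end QuadraticMap

theorem so_generated_by_involutions_odd_dim_general {K E : Type*} [Field K] [AddCommGroup E]
    [Module K E] [FiniteDimensional K E]
    (hK : (2 : K) ≠ 0) {n : ℕ} (hn : Module.finrank K E = n) (hodd : Odd n)
    (q : QuadraticForm K E) (hq : q.Anisotropic)
    (φ : E ≃ₗ[K] E) (hφq : ∀ z, q (φ z) = q z)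
    (hφdet : LinearMap.det (φ : E →ₗ[K] E) = 1) :
    ∃ l : List (E ≃ₗ[K] E),
      l.length ≤ n - 1 ∧
      (∀ g ∈ l, g * g = 1 ∧ (∀ z, q (g z) = q z) ∧
        LinearMap.det (g : E →ₗ[K] E) = 1) ∧
      l.prod = φ := by
  obtain ⟨l, hlen, hl, rfl⟩ := q.exists_prod_reflection_eq hq φ hφq
  have heven : Even l.length := by
    refine (neg_one_pow_eq_one_iff_even (R := K) (by grind)).1 ?_
    rw [← QuadraticMap.det_prod_of_forall_mem_reflection hl, hφdet]
  have hlen' : l.length ≤ n - 1 := by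
    rcases heven with ⟨k, hk⟩
    rcases hodd with ⟨j, hj⟩
    omega
  set ν : E ≃ₗ[K] E := LinearEquiv.neg K
  refine ⟨l.map (ν * ·), by simpa using hlen', ?_, ?_⟩
  · simp only [List.mem_map]
    rintro _ ⟨g, hg, rfl⟩
    obtain ⟨v, hv, rfl⟩ := hl g hg
    refine ⟨?_, fun z ↦ ?_, ?_⟩
    · rw [(LinearEquiv.commute_neg _).symm.mul_mul_mul_comm, LinearEquiv.neg_mul_neg,
        QuadraticMap.reflection_mul_self, one_mul]
    · simp [ν, QuadraticMap.map_reflection]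
    · rw [LinearEquiv.coe_toLinearMap_mul, map_mul, LinearEquiv.det_neg, hn, hodd.neg_one_pow,
        QuadraticMap.det_reflection, neg_one_mul, neg_neg]
  · obtain ⟨k, hk⟩ := heven
    rw [List.prod_map_mul_left_of_commute (fun g _ ↦ LinearEquiv.commute_neg g), hk, ← two_mul,
      pow_mul, sq, LinearEquiv.neg_mul_neg, one_pow, one_mul]

/-- Let `(E,q)` be a finite-dimensional anisotropic quadratic space of odd dimension `n`
over a field of characteristic ≠ 2, with polar form not identically zero. Then every
element of `SO(E,q)` is a product of at most `n - 1` involutions belonging to `SO(E,q)`. -/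
theorem so_generated_by_involutions_odd_dim {K E : Type*} [Field K] [AddCommGroup E]
    [Module K E] [FiniteDimensional K E]
    (hK : (2 : K) ≠ 0) {n : ℕ} (hn : Module.finrank K E = n) (hodd : Odd n)
    (q : QuadraticForm K E) (hq : q.Anisotropic)
    (hb : ∃ u v, QuadraticMap.polar q u v ≠ 0)
    (φ : E ≃ₗ[K] E) (hφq : ∀ z, q (φ z) = q z)
    (hφdet : LinearMap.det (φ : E →ₗ[K] E) = 1) :
    ∃ l : List (E ≃ₗ[K] E),
      l.length ≤ n - 1 ∧
      (∀ g ∈ l, g * g = 1 ∧ (∀ z, q (g z) = q z) ∧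
        LinearMap.det (g : E →ₗ[K] E) = 1) ∧
      l.prod = φ :=
  so_generated_by_involutions_odd_dim_general hK hn hodd q hq φ hφq hφdet
end

section
/- Let K be a field, g an automorphism of K(x) over k induced by a field automorphism g of K of order 2 applied to coefficients, and let a ∈ K, P ∈ K(x)*. The pair condition 'a^g = a and P(x)·P^g(x) = a' is preserved under specialization: if P = A/B with A, B ∈ K[x] coprime, then B has no roots in the fixed field k* of g, and for every μ ∈ k*, the constant λ = P(μ) ∈ K satisfies λ·λ^g = a. -/
/-!
Evaluating `A · A^g = a · B · B^g` at a `g`-fixed point `μ` gives `A(μ) · g(A(μ)) = a · B(μ) · g(B(μ))`,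
since `P^g(μ) = g(P(μ))` when `g μ = μ`. A root `μ` of `B` would thus be a root of `A`, which
coprimality forbids; dividing by `B(μ) · g(B(μ)) ≠ 0` then gives the norm equation for `P(μ)`.
-/

namespace Polynomial

variable {R : Type*} [CommSemiring R]

theorem eval_map_of_apply_eq_self (σ : R →+* R) (p : R[X]) {μ : R} (hμ : σ μ = μ) :
    (p.map σ).eval μ = σ (p.eval μ) := by
  simpa only [hμ] using eval_map_apply (p := p) σ μ

theorem eval_mul_map_eq_of_apply_eq_self (σ : R →+* R) {A B : R[X]} {a μ : R}
    (hrel : A * A.map σ = C a * (B * B.map σ)) (hμ : σ μ = μ) :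
    A.eval μ * σ (A.eval μ) = a * (B.eval μ * σ (B.eval μ)) := by
  simpa only [eval_mul, eval_C, eval_map_of_apply_eq_self σ _ hμ] using congrArg (eval μ) hrel

theorem eval_ne_zero_of_isCoprime_of_eval_eq_zero [Nontrivial R] {A B : R[X]}
    (hcop : IsCoprime A B) {μ : R} (hA : A.eval μ = 0) : B.eval μ ≠ 0 := by
  simpa only [coe_aeval_eq_eval, hA, ne_eq, not_true_eq_false, false_or] using
    aeval_ne_zero_of_isCoprime hcop μ

end Polynomial

theorem div_mul_map_div_eq_of_mul_map_eq {K : Type*} [Field K] (σ : K →+* K) {x y a : K}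
    (h : x * σ x = a * (y * σ y)) (hy : y ≠ 0) : x / y * σ (x / y) = a := by
  have hσy : σ y ≠ 0 := (map_ne_zero σ).mpr hy
  rw [map_div₀]
  field_simp
  linear_combination h

theorem specialization_preserves_norm_condition_general {K : Type*} [Field K]
    (g : K ≃+* K)
    (a : K)
    (A B : Polynomial K) (hcop : IsCoprime A B)
    (hrel : A * A.map (g : K →+* K)
      = Polynomial.C a * (B * B.map (g : K →+* K))) :
    ∀ μ : K, g μ = μ → μ ≠ 0 →
      B.eval μ ≠ 0 ∧
      (A.eval μ / B.eval μ) * g (A.eval μ / B.eval μ) = a := by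
  intro μ hμ _
  have hnorm := Polynomial.eval_mul_map_eq_of_apply_eq_self (g : K →+* K) hrel hμ
  have hBμ : B.eval μ ≠ 0 := by
    intro hB0
    have hA0 : A.eval μ = 0 := by
      simpa only [hB0, zero_mul, mul_zero, mul_eq_zero, map_eq_zero, or_self] using hnorm
    exact Polynomial.eval_ne_zero_of_isCoprime_of_eval_eq_zero hcop hA0 hB0
  exact ⟨hBμ, div_mul_map_div_eq_of_mul_map_eq (g : K →+* K) hnorm hBμ⟩

/-- Let `g` be an order-2 automorphism of a field `K`, acting coefficient-wise on
`K[x]` and `K(x)`. Suppose `a ∈ K` is `g`-fixed and `P = A / B ∈ K(x)*` (with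
`A, B ∈ K[x]` coprime, nonzero) satisfies `P · P^g = a`, i.e.
`A · A^g = a · B · B^g`. Then `B` has no roots in the nonzero elements of the fixed
field of `g`, and for every such `μ` the constant `λ = P(μ) = A(μ)/B(μ)` satisfies
`λ · λ^g = a`. -/
theorem specialization_preserves_norm_condition {K : Type*} [Field K]
    (g : K ≃+* K) (hg2 : ∀ x, g (g x) = x) (hgne : (g : K → K) ≠ id)
    (a : K) (ha : g a = a)
    (A B : Polynomial K) (hA : A ≠ 0) (hB : B ≠ 0) (hcop : IsCoprime A B)
    (hrel : A * A.map (g : K →+* K)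
      = Polynomial.C a * (B * B.map (g : K →+* K))) :
    ∀ μ : K, g μ = μ → μ ≠ 0 →
      B.eval μ ≠ 0 ∧
      (A.eval μ / B.eval μ) * g (A.eval μ / B.eval μ) = a :=
  specialization_preserves_norm_condition_general g a A B hcop hrel
end
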